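/- arXiv:1805.04898 — 2 statements merged into one kernel-verified Lean document; each statement's English description precedes it below -/
import Mathlib

section
/- Under Assumptions Q1, A1-i and A1-ii, for every payoff vector π ∈ ℝ^𝒜 and all actions a, b ∈ 𝒜: if π_a ≤ π_b then g_{b*}[π] ≤ g_{a*}[π]; and if π_a < π_b then g_{b*}[π] < g_{a*}[π]. -/
open MeasureTheory Finset
open scoped Classical

/-- The maximal payoff among actions in `S`. -/
noncomputable def piStar {A : Type*} (π : A → ℝ) (S : Finset A) : ℝ :=
  if h : S.Nonempty then S.sup' h π else 0

/-- `Q(q) = μ_Q((-∞, q])`. -/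
noncomputable def Qfun (μQ : Measure ℝ) (q : ℝ) : ℝ := (μQ (Set.Iic q)).toReal

/-- The individual ex-ante first-order net gain `g_{a*}[π]`. -/
noncomputable def gain {A : Type*} [Fintype A] [DecidableEq A]
    (P : A → Finset A → ℝ) (μQ : Measure ℝ) (π : A → ℝ) (a : A) : ℝ :=
  ∑ A' ∈ (Finset.univ.erase a).powerset,
    P a A' * ∫ q, max (piStar π A' - π a - q) 0 ∂μQ

/-!
Write `F x = ∫ (x - q)⁺ dμ_Q`. By Q1, `F` is monotone, vanishes on `(-∞, 0]` and is strictly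
increasing on `[0, ∞)`, so `g_e = Σ_X ℙ_e(X) · max_{c ∈ X} F(π_c - π_e)`. If `π_a ≤ π_b`, the
summand of `g_b` only depends on `X ∩ H` with `H = {c : π_b < π_c}`, a set avoiding `a` and `b`.
Removing the elements of `H` in increasing order of payoff, `max_{c ∈ X ∩ H}` telescopes into a
combination of the indicators `[X ∩ S ≠ ∅]`, `S ⊆ H`, whose expectations agree under `ℙ_a` and
`ℙ_b` by A1-ii. Hence `g_b = Σ_X ℙ_a(X) · max_{c ∈ X} F(π_c - π_b)`, which is termwise at most
`g_a`, and strictly smaller on the sets containing `b`, which carry positive weight by A1-i.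
-/

noncomputable def expectedNetGain (μ : Measure ℝ) (x : ℝ) : ℝ := ∫ q, max (x - q) 0 ∂μ

section ExpectedNetGain

variable {μ : Measure ℝ}

lemma ae_nonneg_of_Qfun [IsFiniteMeasure μ] (hQ : ∀ q : ℝ, q < 0 → Qfun μ q = 0) :
    ∀ᵐ q ∂μ, 0 ≤ q := by
  have hlt : ∀ n : ℕ, ∀ᵐ q ∂μ, -(1 / (n + 1 : ℝ)) < q := by
    intro n
    have hQn := hQ (-(1 / (n + 1 : ℝ))) (neg_neg_of_pos (by positivity))
    rw [Qfun, ENNReal.toReal_eq_zero_iff] at hQn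
    rw [ae_iff]
    simp only [not_lt]
    exact hQn.resolve_right (measure_ne_top _ _)
  filter_upwards [ae_all_iff.2 hlt] with q hq
  by_contra! hneg
  obtain ⟨n, hn⟩ := exists_nat_one_div_lt (neg_pos.2 hneg)
  linarith [hq n]

lemma measure_Iio_ne_zero_of_Qfun (hQ : ∀ q : ℝ, 0 < q → 0 < Qfun μ q) {y : ℝ} (hy : 0 < y) :
    μ (Set.Iio y) ≠ 0 := by
  intro hzero
  have hQy := hQ (y / 2) (half_pos hy)
  rw [Qfun, measure_mono_null (Set.Iic_subset_Iio.2 (half_lt_self hy)) hzero] at hQy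
  exact hQy.false

lemma integrable_max_sub_zero [IsFiniteMeasure μ] (h0 : ∀ᵐ q ∂μ, 0 ≤ q) (x : ℝ) :
    Integrable (fun q => max (x - q) 0) μ := by
  refine Integrable.mono' (integrable_const (max x 0))
    ((continuous_const.sub continuous_id).max continuous_const).aestronglyMeasurable ?_
  filter_upwards [h0] with q hq
  rw [Real.norm_eq_abs, abs_of_nonneg (le_max_right _ _)]
  exact max_le_max (by linarith) le_rfl

lemma expectedNetGain_nonneg (x : ℝ) : 0 ≤ expectedNetGain μ x :=
  integral_nonneg fun _ => le_max_right _ _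

lemma expectedNetGain_monotone [IsFiniteMeasure μ] (h0 : ∀ᵐ q ∂μ, 0 ≤ q) :
    Monotone (expectedNetGain μ) := fun x y hxy =>
  integral_mono (integrable_max_sub_zero h0 x) (integrable_max_sub_zero h0 y)
    fun q => max_le_max (by linarith) le_rfl

lemma expectedNetGain_of_nonpos (h0 : ∀ᵐ q ∂μ, 0 ≤ q) {x : ℝ} (hx : x ≤ 0) :
    expectedNetGain μ x = 0 := by
  refine integral_eq_zero_of_ae ?_
  filter_upwards [h0] with q hq
  exact max_eq_right (by linarith)

lemma expectedNetGain_lt [IsFiniteMeasure μ] (h0 : ∀ᵐ q ∂μ, 0 ≤ q) {x y : ℝ} (hxy : x < y)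
    (hy : μ (Set.Iio y) ≠ 0) : expectedNetGain μ x < expectedNetGain μ y := by
  rw [← sub_pos, expectedNetGain, expectedNetGain,
    ← integral_sub (integrable_max_sub_zero h0 y) (integrable_max_sub_zero h0 x),
    integral_pos_iff_support_of_nonneg
      (fun q => sub_nonneg.2 (max_le_max (by linarith) le_rfl))
      ((integrable_max_sub_zero h0 y).sub (integrable_max_sub_zero h0 x))]
  refine (pos_iff_ne_zero.2 hy).trans_le (measure_mono fun q (hq : q < y) => ?_)
  rw [Function.mem_support, max_eq_left (by linarith : (0 : ℝ) ≤ y - q)]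
  exact sub_ne_zero.2 (max_lt (by linarith) (by linarith)).ne'

end ExpectedNetGain

section PiStar

variable {ι : Type*} (h : ι → ℝ)

lemma piStar_of_nonempty {S : Finset ι} (hS : S.Nonempty) : piStar h S = S.sup' hS h :=
  dif_pos hS

lemma le_piStar {S : Finset ι} {c : ι} (hc : c ∈ S) : h c ≤ piStar h S := by
  rw [piStar_of_nonempty h ⟨c, hc⟩]
  exact le_sup' h hc

lemma piStar_nonneg (hh : ∀ c, 0 ≤ h c) (S : Finset ι) : 0 ≤ piStar h S := by
  rcases S.eq_empty_or_nonempty with rfl | ⟨c, hc⟩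
  · simp [piStar]
  · exact (hh c).trans (le_piStar h hc)

lemma piStar_mono {h h' : ι → ℝ} (hle : ∀ c, h c ≤ h' c) (S : Finset ι) :
    piStar h S ≤ piStar h' S := by
  rcases S.eq_empty_or_nonempty with rfl | hS
  · simp [piStar]
  · rw [piStar_of_nonempty h hS, piStar_of_nonempty h' hS]
    exact sup'_mono_fun fun c _ => hle c

lemma piStar_comp_of_monotone {f : ℝ → ℝ} (hf : Monotone f) {S : Finset ι} (hS : S.Nonempty) :
    piStar (f ∘ h) S = f (piStar h S) := by
  rw [piStar_of_nonempty _ hS, piStar_of_nonempty _ hS,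
    apply_sup'_eq_sup'_comp hS f fun x y => hf.map_max]

lemma piStar_comp_sub_of_monotone {F : ℝ → ℝ} (hF : Monotone F) (t : ℝ) {S : Finset ι}
    (hS : S.Nonempty) : piStar (fun c => F (h c - t)) S = F (piStar h S - t) :=
  piStar_comp_of_monotone h (f := fun x => F (x - t)) (fun _ _ hxy => hF (by linarith)) hS

lemma piStar_inter_of_eq_zero [DecidableEq ι] {H : Finset ι} (hh : ∀ c, 0 ≤ h c)
    (hzero : ∀ c ∉ H, h c = 0) (X : Finset ι) : piStar h (X ∩ H) = piStar h X := by
  rcases X.eq_empty_or_nonempty with rfl | hX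
  · simp
  refine le_antisymm ?_ ?_
  · rcases (X ∩ H).eq_empty_or_nonempty with hXH | hXH
    · rw [hXH]
      exact piStar_nonneg h hh X
    · rw [piStar_of_nonempty h hXH, piStar_of_nonempty h hX]
      exact sup'_mono h inter_subset_left hXH
  · rw [piStar_of_nonempty h hX]
    refine sup'_le _ _ fun c hc => ?_
    by_cases hcH : c ∈ H
    · exact le_piStar h (mem_inter.2 ⟨hc, hcH⟩)
    · exact (hzero c hcH).le.trans (piStar_nonneg h hh _)

lemma piStar_inter_insert [DecidableEq ι] {c : ι} {S : Finset ι} (hc : ∀ d ∈ S, h c ≤ h d)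
    (X : Finset ι) :
    piStar h (X ∩ insert c S) = piStar h (X ∩ S) + h c *
      ((if (X ∩ insert c S).Nonempty then 1 else 0) - (if (X ∩ S).Nonempty then 1 else 0)) := by
  by_cases hcX : c ∈ X
  · rw [inter_insert_of_mem hcX]
    rcases (X ∩ S).eq_empty_or_nonempty with hXS | hXS
    · simp [hXS, piStar]
    · have hmax : piStar h (insert c (X ∩ S)) = piStar h (X ∩ S) := by
        rw [piStar_of_nonempty h (insert_nonempty c _), sup'_insert (H := hXS),
          ← piStar_of_nonempty h hXS]
        obtain ⟨d, hd⟩ := hXS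
        exact max_eq_right ((hc d (mem_inter.1 hd).2).trans (le_piStar h hd))
      simp [hmax, hXS]
  · rw [inter_insert_of_notMem hcX]
    ring

theorem sum_mul_piStar_inter_eq [DecidableEq ι] {s t : Finset (Finset ι)}
    {w w' : Finset ι → ℝ} (H : Finset ι)
    (hw : ∀ S ⊆ H, ∑ X ∈ s with (X ∩ S).Nonempty, w X = ∑ X ∈ t with (X ∩ S).Nonempty, w' X) :
    ∑ X ∈ s, w X * piStar h (X ∩ H) = ∑ X ∈ t, w' X * piStar h (X ∩ H) := by
  induction H using Finset.induction_on_min_value h with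
  | empty => simp [piStar]
  | insert c S _ hc ih =>
    have hsplit : ∀ (u : Finset (Finset ι)) (v : Finset ι → ℝ),
        ∑ X ∈ u, v X * piStar h (X ∩ insert c S) = ∑ X ∈ u, v X * piStar h (X ∩ S) +
          h c * (∑ X ∈ u with (X ∩ insert c S).Nonempty, v X -
            ∑ X ∈ u with (X ∩ S).Nonempty, v X) := by
      intro u v
      rw [sum_filter, sum_filter, ← sum_sub_distrib, mul_sum, ← sum_add_distrib]
      refine sum_congr rfl fun X _ => ?_
      rw [piStar_inter_insert h hc]
      split_ifs <;> ring
    rw [hsplit, hsplit, ih fun S' hS' => hw S' (hS'.trans (subset_insert c S)),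
      hw _ subset_rfl, hw S (subset_insert c S)]

end PiStar

section Gain

variable {A : Type*} [Fintype A] [DecidableEq A] {P : A → Finset A → ℝ} {μQ : Measure ℝ}

lemma gain_eq_sum_piStar (hPempty : ∀ a, P a ∅ = 0) (hmono : Monotone (expectedNetGain μQ))
    (π : A → ℝ) (e : A) :
    gain P μQ π e = ∑ X ∈ (univ.erase e).powerset,
      P e X * piStar (fun c => expectedNetGain μQ (π c - π e)) X := by
  refine sum_congr rfl fun X _ => ?_
  rcases X.eq_empty_or_nonempty with rfl | hX
  · simp [hPempty]
  · rw [piStar_comp_sub_of_monotone π hmono _ hX]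
    rfl

lemma gain_eq_sum_piStar_of_le [IsFiniteMeasure μQ] (hPempty : ∀ a, P a ∅ = 0)
    (h0 : ∀ᵐ q ∂μQ, 0 ≤ q) {π : A → ℝ} {a b : A}
    (hhit : ∀ S : Finset A, S ⊆ univ \ {a, b} →
      ∑ X ∈ (univ.erase a).powerset with (X ∩ S).Nonempty, P a X
        = ∑ X ∈ (univ.erase b).powerset with (X ∩ S).Nonempty, P b X)
    (hab : π a ≤ π b) :
    gain P μQ π b = ∑ X ∈ (univ.erase a).powerset,
      P a X * piStar (fun c => expectedNetGain μQ (π c - π b)) X := by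
  set H : Finset A := univ.filter fun c => π b < π c
  have hHab : H ⊆ univ \ {a, b} := fun c hc => by
    simp only [H, mem_filter, mem_univ, true_and] at hc
    simp only [mem_sdiff, mem_univ, mem_insert, mem_singleton, true_and, not_or]
    constructor <;> rintro rfl <;> linarith
  have hinter := piStar_inter_of_eq_zero (fun c => expectedNetGain μQ (π c - π b)) (H := H)
    (fun c => expectedNetGain_nonneg _)
    (fun c hc => expectedNetGain_of_nonpos h0 (by simpa [H] using hc))
  rw [gain_eq_sum_piStar hPempty (expectedNetGain_monotone h0)]
  simpa only [hinter] using sum_mul_piStar_inter_eq (fun c => expectedNetGain μQ (π c - π b)) H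
    fun S hS => (hhit S (hS.trans hHab)).symm

end Gain

theorem stmt1_general {A : Type*} [Fintype A] [DecidableEq A]
    (P : A → Finset A → ℝ) (μQ : Measure ℝ) [IsProbabilityMeasure μQ]
    (hPnn : ∀ a A', 0 ≤ P a A')
    (hPempty : ∀ a, P a (∅ : Finset A) = 0)
    -- Assumption Q1
    (hQ1a : ∀ q : ℝ, q < 0 → Qfun μQ q = 0)
    (hQ1b : ∀ q : ℝ, 0 < q → 0 < Qfun μQ q)
    -- Assumption A1-i
    (hA1i : ∀ a b : A, b ≠ a →
      0 < ∑ A' ∈ (Finset.univ.erase a).powerset.filter (fun A' => b ∈ A'), P a A')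
    -- Assumption A1-ii
    (hA1ii : ∀ a b : A, ∀ S : Finset A, S ⊆ Finset.univ \ {a, b} →
      ∑ A' ∈ (Finset.univ.erase a).powerset.filter (fun A' => (A' ∩ S).Nonempty), P a A'
        = ∑ A' ∈ (Finset.univ.erase b).powerset.filter (fun A' => (A' ∩ S).Nonempty), P b A')
    (π : A → ℝ) (a b : A) :
    (π a ≤ π b → gain P μQ π b ≤ gain P μQ π a) ∧
      (π a < π b → gain P μQ π b < gain P μQ π a) := by
  have h0 := ae_nonneg_of_Qfun hQ1a
  have hmono := expectedNetGain_monotone h0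
  have hterm : π a ≤ π b → ∀ X,
      P a X * piStar (fun c => expectedNetGain μQ (π c - π b)) X
        ≤ P a X * piStar (fun c => expectedNetGain μQ (π c - π a)) X := fun hab X =>
    mul_le_mul_of_nonneg_left (piStar_mono (fun c => hmono (by linarith)) X) (hPnn a X)
  refine ⟨fun hab => ?_, fun hab => ?_⟩
  · rw [gain_eq_sum_piStar_of_le hPempty h0 (hA1ii a b) hab, gain_eq_sum_piStar hPempty hmono]
    exact sum_le_sum fun X _ => hterm hab X
  · obtain ⟨X₀, hX₀, hP⟩ := exists_lt_of_sum_lt (f := fun _ => (0 : ℝ))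
      (by simpa using hA1i a b (ne_of_apply_ne π hab.ne'))
    obtain ⟨hX₀a, hbX₀⟩ := mem_filter.1 hX₀
    have hb : π b ≤ piStar π X₀ := le_piStar π hbX₀
    rw [gain_eq_sum_piStar_of_le hPempty h0 (hA1ii a b) hab.le, gain_eq_sum_piStar hPempty hmono]
    refine sum_lt_sum (fun X _ => hterm hab.le X) ⟨X₀, hX₀a, mul_lt_mul_of_pos_left ?_ hP⟩
    rw [piStar_comp_sub_of_monotone π hmono _ ⟨b, hbX₀⟩,
      piStar_comp_sub_of_monotone π hmono _ ⟨b, hbX₀⟩]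
    exact expectedNetGain_lt h0 (by linarith) (measure_Iio_ne_zero_of_Qfun hQ1b (by linarith))

theorem stmt1 {A : Type*} [Fintype A] [DecidableEq A] [Nonempty A]
    (P : A → Finset A → ℝ) (μQ : Measure ℝ) [IsProbabilityMeasure μQ]
    (hPnn : ∀ a A', 0 ≤ P a A')
    (hPsupp : ∀ a A', ¬ A' ⊆ Finset.univ.erase a → P a A' = 0)
    (hPempty : ∀ a, P a (∅ : Finset A) = 0)
    (hPsum : ∀ a, ∑ A' ∈ (Finset.univ.erase a).powerset, P a A' = 1)
    -- Assumption Q1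
    (hQ1a : ∀ q : ℝ, q < 0 → Qfun μQ q = 0)
    (hQ1b : ∀ q : ℝ, 0 < q → 0 < Qfun μQ q)
    -- Assumption A1-i
    (hA1i : ∀ a b : A, b ≠ a →
      0 < ∑ A' ∈ (Finset.univ.erase a).powerset.filter (fun A' => b ∈ A'), P a A')
    -- Assumption A1-ii
    (hA1ii : ∀ a b : A, ∀ S : Finset A, S ⊆ Finset.univ \ {a, b} →
      ∑ A' ∈ (Finset.univ.erase a).powerset.filter (fun A' => (A' ∩ S).Nonempty), P a A'
        = ∑ A' ∈ (Finset.univ.erase b).powerset.filter (fun A' => (A' ∩ S).Nonempty), P b A')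
    (π : A → ℝ) (a b : A) :
    (π a ≤ π b → gain P μQ π b ≤ gain P μQ π a) ∧
      (π a < π b → gain P μQ π b < gain P μQ π a) :=
  stmt1_general P μQ hPnn hPempty hQ1a hQ1b hA1i hA1ii π a b
end

section
/- (δ-passivity of cost-benefit rationalizable dynamics) Suppose Assumptions Q1, A1-i and A1-ii hold and the regularity condition holds at (a, π) for every a ∈ 𝒜. Fix x ∈ Δ^𝒜, let z_a be the unique exact-rate transition vector for a at π, set Δx := Σ_{a∈𝒜} x_a z_a, and fix any Δπ ∈ ℝ^𝒜. Then the function t ↦ G(x + tΔx)[π + tΔπ] has a right derivative at t = 0 equal to H(x)[π] + Δx · Δπ. -/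
/-!
Write `J(y) = ∫ max (y - q) 0 dμ_Q`. Where `μ_Q` has no atom, `J` is differentiable with
`J' = Q`, and by regularity the maximum of `π + tΔπ` over each sample `A'` is attained, for
small `t`, at the same unique maximiser `b`. Hence the derivative of `G` along
`(x + tΔx, π + tΔπ)` is `Σ_a Δx_a g_a + Σ_a x_a Σ_A' P Q (Δπ_b - Δπ_a)`; the second sum is
`Δx · Δπ`. The first is `H(x)[π]`: by A1-ii and a layer-cake decomposition the gain `g_a` is
antitone in `π_a`, so `g_**(A')` is attained at the best action `b` of `A'`.
-/

open MeasureTheory Finset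
open scoped Classical

/-- The set of optimal actions in `S`: `b_*[π](S)`. -/
noncomputable def bStar {A : Type*} (π : A → ℝ) (S : Finset A) : Finset A :=
  S.filter (fun b => π b = piStar π S)

/-- `g_{**}[π](S) = min_{b ∈ S} g_{b*}[π]`. -/
noncomputable def gainMin {A : Type*} [Fintype A] [DecidableEq A]
    (P : A → Finset A → ℝ) (μQ : Measure ℝ) (π : A → ℝ) (S : Finset A) : ℝ :=
  if h : S.Nonempty then S.inf' h (fun b => gain P μQ π b) else 0

/-- The individual ex-ante second-order net gain `h_{a*}[π]`. -/
noncomputable def gain2 {A : Type*} [Fintype A] [DecidableEq A]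
    (P : A → Finset A → ℝ) (μQ : Measure ℝ) (π : A → ℝ) (a : A) : ℝ :=
  ∑ A' ∈ (Finset.univ.erase a).powerset,
    P a A' * Qfun μQ (piStar π A' - π a) * (gainMin P μQ π A' - gain P μQ π a)

/-- The aggregate first-order gain `G(x)[π] = Σ_a x_a g_{a*}[π]`. -/
noncomputable def Gagg {A : Type*} [Fintype A] [DecidableEq A]
    (P : A → Finset A → ℝ) (μQ : Measure ℝ) (x π : A → ℝ) : ℝ :=
  ∑ a : A, x a * gain P μQ π a

/-- The aggregate second-order gain `H(x)[π] = Σ_a x_a h_{a*}[π]`. -/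
noncomputable def Hagg {A : Type*} [Fintype A] [DecidableEq A]
    (P : A → Finset A → ℝ) (μQ : Measure ℝ) (x π : A → ℝ) : ℝ :=
  ∑ a : A, x a * gain2 P μQ π a

/-- `Δx = Σ_a x_a z_a`, where `z_a` is the exact-rate transition vector for `a` at `π`
whose target is the optimal available action chosen by the selector `sel`. -/
noncomputable def deltaX {A : Type*} [Fintype A] [DecidableEq A]
    (P : A → Finset A → ℝ) (μQ : Measure ℝ) (π x : A → ℝ)
    (sel : A → Finset A → A) : A → ℝ :=
  fun b => ∑ a : A, x a *
    (∑ A' ∈ (Finset.univ.erase a).powerset,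
      P a A' * Qfun μQ (piStar π A' - π a) *
        ((if b = sel a A' then (1 : ℝ) else 0) - (if b = a then (1 : ℝ) else 0)))

open Filter Topology

section CallIntegral

variable {μ : Measure ℝ} [IsFiniteMeasure μ]

lemma ae_nonneg_of_Qfun_eq_zero (h : ∀ q : ℝ, q < 0 → Qfun μ q = 0) : ∀ᵐ q ∂μ, 0 ≤ q := by
  have hIio : Set.Iio (0 : ℝ) = ⋃ n : ℕ, Set.Iic (-(1 / ((n : ℝ) + 1))) := by
    refine (iUnion_Iic_eq_Iio_of_lt_of_tendsto (F := atTop)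
      (fun n => neg_neg_of_pos (by positivity)) ?_).symm
    simpa using (tendsto_one_div_add_atTop_nhds_zero_nat (𝕜 := ℝ)).neg
  rw [ae_iff]
  simp only [not_le]
  change μ (Set.Iio 0) = 0
  rw [hIio]
  refine measure_iUnion_null fun n => ?_
  have := h _ (neg_neg_of_pos (by positivity : (0 : ℝ) < 1 / ((n : ℝ) + 1)))
  rwa [Qfun, ENNReal.toReal_eq_zero_iff, or_iff_left (measure_ne_top _ _)] at this

lemma integrable_max_sub (hae : ∀ᵐ q ∂μ, 0 ≤ q) (m : ℝ) :
    Integrable (fun q => max (m - q) 0) μ := by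
  refine (integrable_const (max m 0)).mono'
    ((continuous_const.sub continuous_id).max continuous_const).aestronglyMeasurable ?_
  filter_upwards [hae] with q hq
  rw [Real.norm_of_nonneg (le_max_right _ _)]
  exact max_le_max (by linarith) le_rfl

lemma hasDerivAt_max_sub {q c : ℝ} (hq : q ≠ c) :
    HasDerivAt (fun y => max (y - q) 0) ((Set.Iic c).indicator 1 q) c := by
  rcases hq.lt_or_gt with hqc | hcq
  · rw [Set.indicator_of_mem (Set.mem_Iic.2 hqc.le), Pi.one_apply]
    refine ((hasDerivAt_id c).sub_const q).congr_of_eventuallyEq ?_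
    filter_upwards [lt_mem_nhds hqc] with y hy
    exact max_eq_left (by linarith)
  · rw [Set.indicator_of_notMem (Set.notMem_Iic.2 hcq)]
    refine (hasDerivAt_const c (0 : ℝ)).congr_of_eventuallyEq ?_
    filter_upwards [gt_mem_nhds hcq] with y hy
    exact max_eq_right (by linarith)

lemma hasDerivAt_integral_max_sub (hae : ∀ᵐ q ∂μ, 0 ≤ q) {c : ℝ} (hc : μ {c} = 0) :
    HasDerivAt (fun y => ∫ q, max (y - q) 0 ∂μ) (Qfun μ c) c := by
  have hlip : ∀ q : ℝ, LipschitzWith 1 (fun y : ℝ => max (y - q) 0) := fun q =>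
    LipschitzWith.of_dist_le_mul fun y y' => by
      simpa [Real.dist_eq] using abs_max_sub_max_le_abs (y - q) (y' - q) 0
  have key := hasDerivAt_integral_of_dominated_loc_of_lip (F := fun y q => max (y - q) 0)
    (x₀ := c) (F' := (Set.Iic c).indicator 1) (bound := fun _ => 1) univ_mem
    (Eventually.of_forall fun y =>
      ((continuous_const.sub continuous_id).max continuous_const).aestronglyMeasurable)
    (integrable_max_sub hae c) (measurable_one.indicator measurableSet_Iic).aestronglyMeasurable
    (ae_of_all _ fun q => by simpa using hlip q) (integrable_const 1)
    ((measure_eq_zero_iff_ae_notMem.1 hc).mono fun q hq => hasDerivAt_max_sub hq)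
  simpa [integral_indicator_one measurableSet_Iic, Qfun, measureReal_def] using key.2

end CallIntegral

section piStar

variable {A : Type*}

lemma le_piStar_s10 (π : A → ℝ) {S : Finset A} {d : A} (hd : d ∈ S) : π d ≤ piStar π S := by
  rw [piStar, dif_pos ⟨d, hd⟩]
  exact le_sup' π hd

lemma piStar_eq_of_forall_le {π : A → ℝ} {S : Finset A} {b : A} (hb : b ∈ S)
    (h : ∀ d ∈ S, π d ≤ π b) : piStar π S = π b :=
  (le_piStar_s10 π hb).antisymm' <| by
    rw [piStar, dif_pos ⟨b, hb⟩]
    exact sup'_le _ _ h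

lemma lt_piStar_iff {π : A → ℝ} {S : Finset A} (hS : S.Nonempty) {r : ℝ} :
    r < piStar π S ↔ ∃ d ∈ S, r < π d := by
  rw [piStar, dif_pos hS]
  exact lt_sup'_iff hS

lemma mem_bStar_iff {π : A → ℝ} {S : Finset A} {b : A} :
    b ∈ bStar π S ↔ b ∈ S ∧ π b = piStar π S :=
  mem_filter

lemma piStar_add_smul_eventuallyEq {π : A → ℝ} (Δπ : A → ℝ) {S : Finset A} {b : A}
    (hcard : (bStar π S).card = 1) (hb : b ∈ bStar π S) :
    ∀ᶠ t in 𝓝 (0 : ℝ), piStar (π + t • Δπ) S = π b + t * Δπ b := by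
  obtain ⟨hbS, hπb⟩ := mem_bStar_iff.1 hb
  have hlt : ∀ d ∈ S, d ≠ b → π d < π b := fun d hd hdb =>
    (hπb ▸ le_piStar_s10 π hd).lt_of_ne fun h =>
      hdb (card_le_one.1 hcard.le d (mem_bStar_iff.2 ⟨hd, h.trans hπb⟩) b hb)
  have hev : ∀ᶠ t in 𝓝 (0 : ℝ), ∀ d ∈ S, π d + t * Δπ d ≤ π b + t * Δπ b := by
    refine (eventually_all_finset S).2 fun d hd => ?_
    rcases eq_or_ne d b with rfl | hdb
    · exact Eventually.of_forall fun _ => le_rfl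
    · have hcont : Continuous fun t : ℝ => π d + t * Δπ d := by fun_prop
      have hcont' : Continuous fun t : ℝ => π b + t * Δπ b := by fun_prop
      exact (hcont.continuousAt.eventually_lt hcont'.continuousAt
        (by simpa using hlt d hd hdb)).mono fun _ ht => ht.le
  filter_upwards [hev] with t ht
  exact piStar_eq_of_forall_le hbS ht

end piStar

section Monotonicity

variable {A : Type*} [Fintype A] [DecidableEq A]

/-- Assumption A1-ii. -/
def SampleMeetsIndependent (P : A → Finset A → ℝ) : Prop :=
  ∀ a b : A, ∀ S : Finset A, S ⊆ Finset.univ \ {a, b} →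
    ∑ A' ∈ (Finset.univ.erase a).powerset.filter (fun A' => (A' ∩ S).Nonempty), P a A'
      = ∑ A' ∈ (Finset.univ.erase b).powerset.filter (fun A' => (A' ∩ S).Nonempty), P b A'

lemma sum_mul_indicator_Ioo_piStar (π : A → ℝ) (P : A → Finset A → ℝ) {b : A} (hP : P b ∅ = 0)
    (s r : ℝ) :
    ∑ A' ∈ (univ.erase b).powerset, P b A' * (Set.Ioo s (piStar π A')).indicator 1 r
      = if s < r then
          ∑ A' ∈ (univ.erase b).powerset.filter
            (fun A' => (A' ∩ univ.filter (fun d => r < π d)).Nonempty), P b A'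
        else 0 := by
  split_ifs with hsr
  · rw [sum_filter]
    refine sum_congr rfl fun A' _ => ?_
    rcases A'.eq_empty_or_nonempty with rfl | hA'
    · simp [hP]
    · have hiff : r < piStar π A' ↔ (A' ∩ univ.filter (fun d => r < π d)).Nonempty := by
        simp [lt_piStar_iff hA', Finset.Nonempty]
      by_cases hr : r < piStar π A'
      · simp [hr, hsr, hiff.1 hr]
      · simp [hr, mt hiff.2 hr]
  · exact sum_eq_zero fun A' _ => by simp [hsr]

lemma sum_mul_max_piStar_sub_eq_integral (π : A → ℝ) (P : A → Finset A → ℝ) (b : A) (s : ℝ) :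
    ∑ A' ∈ (univ.erase b).powerset, P b A' * max (piStar π A' - s) 0
      = ∫ r, ∑ A' ∈ (univ.erase b).powerset, P b A' * (Set.Ioo s (piStar π A')).indicator 1 r := by
  rw [integral_finsetSum _ fun A' _ =>
    ((integrable_indicator_iff measurableSet_Ioo).2
      (integrableOn_const measure_Ioo_lt_top.ne)).const_mul _]
  refine sum_congr rfl fun A' _ => ?_
  rw [integral_const_mul, integral_indicator_one measurableSet_Ioo, Real.volume_real_Ioo]

/-- Layer-cake: both sides are `∫_s^∞` of the probability that the sample meets
`{d | r < π d}`, and by A1-ii this probability is the same for `b` and `c` once `r > π b, π c`. -/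
lemma sum_mul_max_piStar_sub_eq_of_le {π : A → ℝ} {P : A → Finset A → ℝ}
    (hP : SampleMeetsIndependent P) (hP0 : ∀ a, P a ∅ = 0) {b c : A} {s : ℝ}
    (hb : π b ≤ s) (hc : π c ≤ s) :
    ∑ A' ∈ (univ.erase b).powerset, P b A' * max (piStar π A' - s) 0
      = ∑ A' ∈ (univ.erase c).powerset, P c A' * max (piStar π A' - s) 0 := by
  simp only [sum_mul_max_piStar_sub_eq_integral,
    sum_mul_indicator_Ioo_piStar π P (hP0 _)]
  congr 1 with r
  split_ifs with hsr
  · refine hP b c _ fun d hd => ?_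
    have hrd := (mem_filter.1 hd).2
    refine mem_sdiff.2 ⟨mem_univ d, ?_⟩
    intro hbc
    rcases (by simpa using hbc : d = b ∨ d = c) with rfl | rfl <;> linarith
  · rfl

end Monotonicity

section Gain

variable {A : Type*} [Fintype A] [DecidableEq A] {P : A → Finset A → ℝ} {μ : Measure ℝ}
  [IsFiniteMeasure μ] {π : A → ℝ}

lemma gain_eq_integral (hae : ∀ᵐ q ∂μ, 0 ≤ q) (d : A) :
    gain P μ π d
      = ∫ q, ∑ A' ∈ (univ.erase d).powerset, P d A' * max (piStar π A' - π d - q) 0 ∂μ := by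
  rw [gain, integral_finsetSum _ fun A' _ => (integrable_max_sub hae _).const_mul _]
  exact sum_congr rfl fun A' _ => (integral_const_mul _ _).symm

lemma gain_le_gain_of_le (hae : ∀ᵐ q ∂μ, 0 ≤ q) (hPnn : ∀ a A', 0 ≤ P a A')
    (hP : SampleMeetsIndependent P) (hP0 : ∀ a, P a ∅ = 0) {b c : A} (hcb : π c ≤ π b) :
    gain P μ π b ≤ gain P μ π c := by
  rw [gain_eq_integral hae, gain_eq_integral hae]
  have hint (d : A) : Integrable (fun q => ∑ A' ∈ (univ.erase d).powerset,
      P d A' * max (piStar π A' - π d - q) 0) μ :=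
    integrable_finsetSum _ fun A' _ => (integrable_max_sub hae _).const_mul _
  refine integral_mono_ae (hint b) (hint c) ?_
  filter_upwards [hae] with q hq
  simp only [sub_sub]
  rw [sum_mul_max_piStar_sub_eq_of_le hP hP0 (c := c) (by linarith) (by linarith)]
  exact sum_le_sum fun A' _ =>
    mul_le_mul_of_nonneg_left (max_le_max (by linarith) le_rfl) (hPnn c A')

lemma gainMin_eq_gain (hae : ∀ᵐ q ∂μ, 0 ≤ q) (hPnn : ∀ a A', 0 ≤ P a A')
    (hP : SampleMeetsIndependent P) (hP0 : ∀ a, P a ∅ = 0) {S : Finset A} {s : A}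
    (hs : s ∈ bStar π S) :
    gainMin P μ π S = gain P μ π s := by
  obtain ⟨hsS, hπs⟩ := mem_bStar_iff.1 hs
  rw [gainMin, dif_pos ⟨s, hsS⟩]
  exact le_antisymm (inf'_le _ hsS) (le_inf' _ _ fun c hc =>
    gain_le_gain_of_le hae hPnn hP hP0 (hπs ▸ le_piStar_s10 π hc))

end Gain

section Derivative

variable {A : Type*} {μ : Measure ℝ} [IsFiniteMeasure μ] {π : A → ℝ}

lemma hasDerivAt_integral_max_piStar_sub (hae : ∀ᵐ q ∂μ, 0 ≤ q) (Δπ : A → ℝ) {S : Finset A}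
    {a b : A} (hcard : (bStar π S).card = 1) (hnull : μ {piStar π S - π a} = 0)
    (hb : b ∈ bStar π S) :
    HasDerivAt (fun t : ℝ => ∫ q, max (piStar (π + t • Δπ) S - (π + t • Δπ) a - q) 0 ∂μ)
      (Qfun μ (piStar π S - π a) * (Δπ b - Δπ a)) 0 := by
  set c := piStar π S - π a
  have haffine : HasDerivAt (fun t : ℝ => c + t * (Δπ b - Δπ a)) (Δπ b - Δπ a) 0 := by
    simpa using ((hasDerivAt_id (0 : ℝ)).mul_const (Δπ b - Δπ a)).const_add c
  refine ((hasDerivAt_integral_max_sub hae hnull).comp_of_eq 0 haffine (by simp))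
    |>.congr_of_eventuallyEq ?_
  filter_upwards [piStar_add_smul_eventuallyEq Δπ hcard hb] with t ht
  simp only [Function.comp_apply, ht, Pi.add_apply, Pi.smul_apply, smul_eq_mul, c,
    (mem_bStar_iff.1 hb).2]
  ring_nf

lemma hasDerivAt_gain_add_smul [Fintype A] [DecidableEq A] (hae : ∀ᵐ q ∂μ, 0 ≤ q)
    (P : A → Finset A → ℝ) (Δπ : A → ℝ) {a : A} (s : Finset A → A)
    (hreg : ∀ A' ∈ (univ.erase a).powerset, P a A' ≠ 0 →
      (bStar π A').card = 1 ∧ μ {piStar π A' - π a} = 0 ∧ s A' ∈ bStar π A') :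
    HasDerivAt (fun t : ℝ => gain P μ (π + t • Δπ) a)
      (∑ A' ∈ (univ.erase a).powerset,
        P a A' * (Qfun μ (piStar π A' - π a) * (Δπ (s A') - Δπ a))) 0 := by
  refine HasDerivAt.fun_sum fun A' hA' => ?_
  by_cases hP : P a A' = 0
  · simpa [hP] using hasDerivAt_const (0 : ℝ) (0 : ℝ)
  · obtain ⟨hcard, hnull, hs⟩ := hreg A' hA' hP
    exact (hasDerivAt_integral_max_piStar_sub hae Δπ hcard hnull hs).const_mul _

end Derivative

lemma sum_deltaX_mul {A : Type*} [Fintype A] [DecidableEq A] (P : A → Finset A → ℝ)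
    (μ : Measure ℝ) (π x : A → ℝ) (sel : A → Finset A → A) (f : A → ℝ) :
    ∑ b, deltaX P μ π x sel b * f b
      = ∑ a, x a * ∑ A' ∈ (univ.erase a).powerset,
          P a A' * Qfun μ (piStar π A' - π a) * (f (sel a A') - f a) := by
  simp only [deltaX, sum_mul, mul_assoc]
  rw [sum_comm]
  refine sum_congr rfl fun a _ => ?_
  simp only [← mul_sum]
  rw [sum_comm]
  refine congrArg _ (sum_congr rfl fun A' _ => ?_)
  simp [← mul_sum, sub_mul, sum_sub_distrib, ite_mul]

theorem stmt10_general {A : Type*} [Fintype A] [DecidableEq A]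
    (P : A → Finset A → ℝ) (μQ : Measure ℝ) [IsProbabilityMeasure μQ]
    (hPnn : ∀ a A', 0 ≤ P a A')
    (hPempty : ∀ a, P a (∅ : Finset A) = 0)
    -- Assumption Q1
    (hQ1a : ∀ q : ℝ, q < 0 → Qfun μQ q = 0)
    -- Assumption A1-ii
    (hA1ii : ∀ a b : A, ∀ S : Finset A, S ⊆ Finset.univ \ {a, b} →
      ∑ A' ∈ (Finset.univ.erase a).powerset.filter (fun A' => (A' ∩ S).Nonempty), P a A'
        = ∑ A' ∈ (Finset.univ.erase b).powerset.filter (fun A' => (A' ∩ S).Nonempty), P b A')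
    (π : A → ℝ)
    -- the regularity condition at `(a, π)` for every `a`
    (hreg : ∀ a : A, ∀ A' ∈ (Finset.univ.erase a).powerset, A'.Nonempty → 0 < P a A' →
      (bStar π A').card = 1 ∧ μQ {piStar π A' - π a} = 0)
    (x : A → ℝ)
    (sel : A → Finset A → A)
    (hsel : ∀ a : A, ∀ A' ∈ (Finset.univ.erase a).powerset, A'.Nonempty →
      sel a A' ∈ bStar π A')
    (Δπ : A → ℝ) :
    HasDerivWithinAt
      (fun t : ℝ => Gagg P μQ (x + t • deltaX P μQ π x sel) (π + t • Δπ))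
      (Hagg P μQ x π + ∑ b : A, deltaX P μQ π x sel b * Δπ b)
      (Set.Ici (0 : ℝ)) 0 := by
  have hae := ae_nonneg_of_Qfun_eq_zero hQ1a
  have hsample : ∀ a, ∀ A' ∈ (univ.erase a).powerset, P a A' ≠ 0 →
      (bStar π A').card = 1 ∧ μQ {piStar π A' - π a} = 0 ∧ sel a A' ∈ bStar π A' := by
    intro a A' hA' hP
    have hne : A'.Nonempty := nonempty_iff_ne_empty.2 fun h => hP (h ▸ hPempty a)
    obtain ⟨hcard, hnull⟩ := hreg a A' hA' hne ((hPnn a A').lt_of_ne' hP)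
    exact ⟨hcard, hnull, hsel a A' hA' hne⟩
  have hHagg : Hagg P μQ x π = ∑ b, deltaX P μQ π x sel b * gain P μQ π b := by
    rw [sum_deltaX_mul, Hagg]
    refine sum_congr rfl fun a _ => congrArg _ (sum_congr rfl fun A' hA' => ?_)
    by_cases hP : P a A' = 0
    · simp [hP]
    · rw [gainMin_eq_gain hae hPnn hA1ii hPempty (hsample a A' hA' hP).2.2]
  have hterm : ∀ a ∈ univ, HasDerivAt
      (fun t : ℝ => (x + t • deltaX P μQ π x sel) a * gain P μQ (π + t • Δπ) a)
      (deltaX P μQ π x sel a * gain P μQ π a + x a * ∑ A' ∈ (univ.erase a).powerset,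
        P a A' * (Qfun μQ (piStar π A' - π a) * (Δπ (sel a A') - Δπ a))) 0 := by
    intro a _
    have hx : HasDerivAt (fun t : ℝ => (x + t • deltaX P μQ π x sel) a)
        (deltaX P μQ π x sel a) 0 := by
      simpa using ((hasDerivAt_id (0 : ℝ)).mul_const (deltaX P μQ π x sel a)).const_add (x a)
    simpa using hx.fun_mul (hasDerivAt_gain_add_smul hae P Δπ (sel a) (hsample a))
  refine ((HasDerivAt.fun_sum hterm).congr_deriv ?_).hasDerivWithinAt
  rw [sum_add_distrib, hHagg, sum_deltaX_mul, sum_deltaX_mul]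
  simp only [mul_assoc]

/-- δ-passivity of cost-benefit rationalizable dynamics: the map
`t ↦ G(x + tΔx)[π + tΔπ]` has right derivative `H(x)[π] + Δx·Δπ` at `t = 0`. -/
theorem stmt10 {A : Type*} [Fintype A] [DecidableEq A] [Nonempty A]
    (P : A → Finset A → ℝ) (μQ : Measure ℝ) [IsProbabilityMeasure μQ]
    (hPnn : ∀ a A', 0 ≤ P a A')
    (hPsupp : ∀ a A', ¬ A' ⊆ Finset.univ.erase a → P a A' = 0)
    (hPempty : ∀ a, P a (∅ : Finset A) = 0)
    (hPsum : ∀ a, ∑ A' ∈ (Finset.univ.erase a).powerset, P a A' = 1)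
    -- Assumption Q1
    (hQ1a : ∀ q : ℝ, q < 0 → Qfun μQ q = 0)
    (hQ1b : ∀ q : ℝ, 0 < q → 0 < Qfun μQ q)
    -- Assumption A1-i
    (hA1i : ∀ a b : A, b ≠ a →
      0 < ∑ A' ∈ (Finset.univ.erase a).powerset.filter (fun A' => b ∈ A'), P a A')
    -- Assumption A1-ii
    (hA1ii : ∀ a b : A, ∀ S : Finset A, S ⊆ Finset.univ \ {a, b} →
      ∑ A' ∈ (Finset.univ.erase a).powerset.filter (fun A' => (A' ∩ S).Nonempty), P a A'
        = ∑ A' ∈ (Finset.univ.erase b).powerset.filter (fun A' => (A' ∩ S).Nonempty), P b A')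
    (π : A → ℝ)
    -- the regularity condition at `(a, π)` for every `a`
    (hreg : ∀ a : A, ∀ A' ∈ (Finset.univ.erase a).powerset, A'.Nonempty → 0 < P a A' →
      (bStar π A').card = 1 ∧ μQ {piStar π A' - π a} = 0)
    (x : A → ℝ) (hx : x ∈ stdSimplex ℝ A)
    (sel : A → Finset A → A)
    (hsel : ∀ a : A, ∀ A' ∈ (Finset.univ.erase a).powerset, A'.Nonempty →
      sel a A' ∈ bStar π A')
    (Δπ : A → ℝ) :
    HasDerivWithinAt
      (fun t : ℝ => Gagg P μQ (x + t • deltaX P μQ π x sel) (π + t • Δπ))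
      (Hagg P μQ x π + ∑ b : A, deltaX P μQ π x sel b * Δπ b)
      (Set.Ici (0 : ℝ)) 0 :=
  stmt10_general P μQ hPnn hPempty hQ1a hA1ii π hreg x sel hsel Δπ
end
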